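/- arXiv:2408.16718 — 2 statements merged into one kernel-verified Lean document; each statement's English description precedes it below -/
import Mathlib

section
/- Let $m>1$, $d_G>0$, $P_M>0$, $n\ge 2$. Suppose $(\alpha,\beta):[0,\infty)\to\mathbb{R}^2$ solves the ODE system $\dot\alpha = (m-1)d_G\,\alpha\,(P_M-\alpha-\tfrac{2n}{d_G}\beta)$, $\dot\beta = (m-1)d_G\,\beta\,(P_M-\alpha-\tfrac{2n(m-1)+4}{d_G(m-1)}\beta)$ with initial data $\alpha_0,\beta_0>0$ satisfying $P_M-\tfrac{2n}{d_G}\beta_0 > \alpha_0 > P_M-\tfrac{2n(m-1)+4}{d_G(m-1)}\beta_0$. Then for all $t>0$: $\alpha_0<\alpha(t)<P_M$, $0<\beta(t)<\beta_0$, and $P_M-\tfrac{2n}{d_G}\beta(t) > \alpha(t) > P_M-\tfrac{2n(m-1)+4}{d_G(m-1)}\beta(t)$. -/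
/-!
With `U = P - α - c₁ β` and `V = α - P + c₂ β` the system reads
`α' = k α U`, `β' = -k β V`, `U' = -k α U + k c₁ β V`, `V' = k α U - k c₂ β V`.
Each of `α, β, U, V` thus has derivative at least (continuous coefficient) × itself as long as
all four are positive, so by Grönwall none of them can be the first to reach zero: the open
orthant in `(α, β, U, V)` is forward invariant. Inside it `α' > 0` and `β' < 0`.
-/

open Set Real

theorem pos_right_of_mul_le_deriv {q q' c : ℝ → ℝ} {a b : ℝ} (hab : a < b)
    (hc : ContinuousOn c (Icc a b)) (hq : ContinuousOn q (Icc a b))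
    (hq' : ∀ s ∈ Ico a b, HasDerivWithinAt q (q' s) (Ici s) s)
    (hpos : ∀ s ∈ Ico a b, 0 < q s) (hle : ∀ s ∈ Ico a b, c s * q s ≤ q' s) : 0 < q b := by
  obtain ⟨L, hL⟩ := isCompact_Icc.bddBelow_image hc
  have hbound : ∀ s ∈ Ico a b, -q' s ≤ L * -q s + 0 := by
    intro s hs
    have : L ≤ c s := hL (mem_image_of_mem c (Ico_subset_Icc_self hs))
    nlinarith [hle s hs, hpos s hs]
  have hgron := le_gronwallBound_of_liminf_deriv_right_le (f := fun s => -q s) hq.neg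
    (fun s hs _ hr => (hq' s hs).neg.liminf_right_slope_le hr) le_rfl hbound b
    (right_mem_Icc.2 hab.le)
  rw [gronwallBound_ε0] at hgron
  nlinarith [hpos a (left_mem_Ico.2 hab), exp_pos (L * (b - a))]

theorem forall_pos_of_mul_le_deriv {ι : Type*} [Finite ι] {x x' c : ι → ℝ → ℝ}
    (hx : ∀ i, ∀ s, 0 ≤ s → HasDerivAt (x i) (x' i s) s)
    (hc : ∀ i, ContinuousOn (c i) (Ici 0))
    (hle : ∀ s, 0 ≤ s → (∀ j, 0 < x j s) → ∀ i, c i s * x i s ≤ x' i s)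
    (h0 : ∀ i, 0 < x i 0) {t : ℝ} (ht : 0 ≤ t) (i : ι) : 0 < x i t := by
  have hcont : ∀ j, ContinuousOn (x j) (Ici 0) := fun j s hs =>
    (hx j s hs).continuousAt.continuousWithinAt
  by_contra! hneg
  set S := ⋃ j, Icc 0 t ∩ x j ⁻¹' Iic 0
  have hS : IsClosed S := isClosed_iUnion_of_finite fun j =>
    ((hcont j).mono Icc_subset_Ici_self).preimage_isClosed_of_isClosed isClosed_Icc isClosed_Iic
  have hSbdd : BddBelow S := bddBelow_Icc.mono (iUnion_subset fun _ => inter_subset_left)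
  obtain ⟨j, ⟨hτ0, hτt⟩, hj⟩ :=
    mem_iUnion.1 (hS.csInf_mem ⟨t, mem_iUnion.2 ⟨i, ⟨ht, le_rfl⟩, hneg⟩⟩ hSbdd)
  set τ := sInf S
  have hbefore : ∀ s ∈ Ico 0 τ, ∀ l, 0 < x l s := fun s hs l => by
    by_contra! h
    exact (csInf_le hSbdd (mem_iUnion.2 ⟨l, ⟨hs.1, hs.2.le.trans hτt⟩, h⟩)).not_gt hs.2
  have hτpos : 0 < τ := hτ0.lt_of_ne fun h => (h0 j).not_ge (h ▸ hj)
  refine (pos_right_of_mul_le_deriv hτpos ((hc j).mono Icc_subset_Ici_self)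
    ((hcont j).mono Icc_subset_Ici_self) (fun s hs => (hx j s hs.1).hasDerivWithinAt)
    (fun s hs => hbefore s hs j) (fun s hs => ?_)).not_ge hj
  exact hle s hs.1 (hbefore s hs) j

namespace LotkaVolterra

variable {k c₁ c₂ P : ℝ} {α β : ℝ → ℝ}

theorem pos_and_mem_region
    (hα : ∀ t, 0 ≤ t → HasDerivAt α (k * α t * (P - α t - c₁ * β t)) t)
    (hβ : ∀ t, 0 ≤ t → HasDerivAt β (k * β t * (P - α t - c₂ * β t)) t)
    (hk : 0 ≤ k) (hc₁ : 0 ≤ c₁) (hα0 : 0 < α 0) (hβ0 : 0 < β 0)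
    (hU0 : α 0 < P - c₁ * β 0) (hV0 : P - c₂ * β 0 < α 0) {t : ℝ} (ht : 0 ≤ t) :
    0 < α t ∧ 0 < β t ∧ α t < P - c₁ * β t ∧ P - c₂ * β t < α t := by
  set U := fun s => P - α s - c₁ * β s
  set V := fun s => α s - P + c₂ * β s
  have hU : ∀ s, 0 ≤ s → HasDerivAt U (-(k * α s * U s) + k * c₁ * β s * V s) s := fun s hs =>
    (((hα s hs).const_sub P).sub ((hβ s hs).const_mul c₁)).congr_deriv (by ring)
  have hV : ∀ s, 0 ≤ s → HasDerivAt V (k * α s * U s - k * c₂ * β s * V s) s := fun s hs =>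
    (((hα s hs).sub_const P).add ((hβ s hs).const_mul c₂)).congr_deriv (by ring)
  have hcont : ∀ {f f' : ℝ → ℝ}, (∀ s, 0 ≤ s → HasDerivAt f (f' s) s) → ContinuousOn f (Ici 0) :=
    fun hf s hs => (hf s hs).continuousAt.continuousWithinAt
  have hpos := forall_pos_of_mul_le_deriv (x := ![α, β, U, V])
    (x' := ![fun s => k * α s * U s, fun s => k * β s * (P - α s - c₂ * β s),
      fun s => -(k * α s * U s) + k * c₁ * β s * V s, fun s => k * α s * U s - k * c₂ * β s * V s])
    (c := ![fun s => k * U s, fun s => -(k * V s), fun s => -(k * α s), fun s => -(k * c₂ * β s)])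
    ?_ ?_ ?_ ?_ ht
  · have hUt : 0 < U t := hpos 2
    have hVt : 0 < V t := hpos 3
    exact ⟨hpos 0, hpos 1, by linarith, by linarith⟩
  · exact fun | 0 => hα | 1 => hβ | 2 => hU | 3 => hV
  · exact fun
      | 0 => (hcont hU).const_smul k
      | 1 => ((hcont hV).const_smul k).neg
      | 2 => ((hcont hα).const_smul k).neg
      | 3 => ((hcont hβ).const_smul (k * c₂)).neg
  · intro s _ hall i
    have hαs : 0 < α s := hall 0
    have hβs : 0 < β s := hall 1
    have hUs : 0 < U s := hall 2
    have hVs : 0 < V s := hall 3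
    match i with
    | 0 => exact (mul_right_comm _ _ _).le
    | 1 =>
      show -(k * V s) * β s ≤ k * β s * (P - α s - c₂ * β s)
      exact le_of_eq (by simp only [V]; ring)
    | 2 =>
      show -(k * α s) * U s ≤ -(k * α s * U s) + k * c₁ * β s * V s
      rw [neg_mul]
      exact le_add_of_nonneg_right (mul_nonneg (mul_nonneg (mul_nonneg hk hc₁) hβs.le) hVs.le)
    | 3 =>
      show -(k * c₂ * β s) * V s ≤ k * α s * U s - k * c₂ * β s * V s
      rw [neg_mul, sub_eq_neg_add]
      exact le_add_of_nonneg_right (mul_nonneg (mul_nonneg hk hαs.le) hUs.le)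
  · exact fun
      | 0 => hα0
      | 1 => hβ0
      | 2 => show 0 < P - α 0 - c₁ * β 0 by linarith
      | 3 => show 0 < α 0 - P + c₂ * β 0 by linarith

theorem strictMonoOn_fst (hα : ∀ t, 0 ≤ t → HasDerivAt α (k * α t * (P - α t - c₁ * β t)) t)
    (hk : 0 < k) (hreg : ∀ t, 0 ≤ t → 0 < α t ∧ α t < P - c₁ * β t) :
    StrictMonoOn α (Ici 0) := by
  refine strictMonoOn_of_hasDerivWithinAt_pos (convex_Ici 0)
    (fun s hs => (hα s hs).continuousAt.continuousWithinAt)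
    (fun s hs => (hα s (interior_subset hs)).hasDerivWithinAt) fun s hs => ?_
  obtain ⟨hαs, hUs⟩ := hreg s (interior_subset hs)
  exact mul_pos (mul_pos hk hαs) (by linarith)

theorem strictAntiOn_snd (hβ : ∀ t, 0 ≤ t → HasDerivAt β (k * β t * (P - α t - c₂ * β t)) t)
    (hk : 0 < k) (hreg : ∀ t, 0 ≤ t → 0 < β t ∧ P - c₂ * β t < α t) :
    StrictAntiOn β (Ici 0) := by
  refine strictAntiOn_of_hasDerivWithinAt_neg (convex_Ici 0)
    (fun s hs => (hβ s hs).continuousAt.continuousWithinAt)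
    (fun s hs => (hβ s (interior_subset hs)).hasDerivWithinAt) fun s hs => ?_
  obtain ⟨hβs, hVs⟩ := hreg s (interior_subset hs)
  exact mul_neg_of_pos_of_neg (mul_pos hk hβs) (by linarith)

end LotkaVolterra

theorem stmt_0_general (m dG PM : ℝ) (n : ℕ) (hm : 1 < m) (hdG : 0 < dG)
    (α β : ℝ → ℝ) (α0 β0 : ℝ) (hα0 : 0 < α0) (hβ0 : 0 < β0)
    (hαode : ∀ t, 0 ≤ t →
      HasDerivAt α ((m - 1) * dG * α t * (PM - α t - (2 * n / dG) * β t)) t)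
    (hβode : ∀ t, 0 ≤ t →
      HasDerivAt β ((m - 1) * dG * β t *
        (PM - α t - ((2 * n * (m - 1) + 4) / (dG * (m - 1))) * β t)) t)
    (hinitα : α 0 = α0) (hinitβ : β 0 = β0)
    (hini1 : α0 < PM - (2 * n / dG) * β0)
    (hini2 : PM - ((2 * n * (m - 1) + 4) / (dG * (m - 1))) * β0 < α0) :
    ∀ t, 0 < t →
      α0 < α t ∧ α t < PM ∧ 0 < β t ∧ β t < β0 ∧
      α t < PM - (2 * n / dG) * β t ∧
      PM - ((2 * n * (m - 1) + 4) / (dG * (m - 1))) * β t < α t := by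
  subst hinitα hinitβ
  have hk : 0 < (m - 1) * dG := mul_pos (sub_pos.2 hm) hdG
  have hc₁ : 0 ≤ 2 * (n : ℝ) / dG := by positivity
  have hreg := fun t (ht : 0 ≤ t) => LotkaVolterra.pos_and_mem_region hαode hβode hk.le hc₁
    hα0 hβ0 hini1 hini2 ht
  have hαmono := LotkaVolterra.strictMonoOn_fst hαode hk fun t ht =>
    ⟨(hreg t ht).1, (hreg t ht).2.2.1⟩
  have hβanti := LotkaVolterra.strictAntiOn_snd hβode hk fun t ht =>
    ⟨(hreg t ht).2.1, (hreg t ht).2.2.2⟩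
  intro t ht
  obtain ⟨-, hβt, hUt, hVt⟩ := hreg t ht.le
  refine ⟨hαmono self_mem_Ici ht.le ht, ?_, hβt, hβanti self_mem_Ici ht.le ht, hUt, hVt⟩
  linarith [mul_nonneg hc₁ hβt.le]

/-- Invariant region for the Lotka–Volterra ODE system (3.2). -/
theorem stmt_0 (m dG PM : ℝ) (n : ℕ) (hm : 1 < m) (hdG : 0 < dG) (hPM : 0 < PM)
    (hn : 2 ≤ n) (α β : ℝ → ℝ) (α0 β0 : ℝ) (hα0 : 0 < α0) (hβ0 : 0 < β0)
    (hαode : ∀ t, 0 ≤ t →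
      HasDerivAt α ((m - 1) * dG * α t * (PM - α t - (2 * n / dG) * β t)) t)
    (hβode : ∀ t, 0 ≤ t →
      HasDerivAt β ((m - 1) * dG * β t *
        (PM - α t - ((2 * n * (m - 1) + 4) / (dG * (m - 1))) * β t)) t)
    (hinitα : α 0 = α0) (hinitβ : β 0 = β0)
    (hini1 : α0 < PM - (2 * n / dG) * β0)
    (hini2 : PM - ((2 * n * (m - 1) + 4) / (dG * (m - 1))) * β0 < α0) :
    ∀ t, 0 < t →
      α0 < α t ∧ α t < PM ∧ 0 < β t ∧ β t < β0 ∧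
      α t < PM - (2 * n / dG) * β t ∧
      PM - ((2 * n * (m - 1) + 4) / (dG * (m - 1))) * β t < α t :=
  stmt_0_general m dG PM n hm hdG α β α0 β0 hα0 hβ0 hαode hβode hinitα hinitβ hini1 hini2
end

section
/- Let $m>1$, $d_G>0$, $P_M>0$, $n\ge 2$ and let $(\alpha,\beta)$ solve the Lotka–Volterra system $\dot\alpha = (m-1)d_G\,\alpha\,(P_M-\alpha-\tfrac{2n}{d_G}\beta)$, $\dot\beta = (m-1)d_G\,\beta\,(P_M-\alpha-\tfrac{2n(m-1)+4}{d_G(m-1)}\beta)$ with initial data $\alpha_0,\beta_0>0$ satisfying $P_M-\tfrac{2n}{d_G}\beta_0 > \alpha_0 > P_M-\tfrac{2n(m-1)+4}{d_G(m-1)}\beta_0$, and assume $\alpha_0\le\alpha(t)\le P_M$ and $\beta(t)>0$ for all $t>0$. Then there exists $C>0$ (depending on $P_M,\alpha_0,\beta_0,m,d_G$) such that $C^{-1}(1+t)^{-1} \le P_M-\alpha(t) \le C(1+t)^{-1}$ and $C^{-1}(1+t)^{-1} \le \beta(t) \le C(1+t)^{-1}$ for all $t>0$. -/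
open Set Filter Topology

lemma stays_pos (f f' : ℝ → ℝ) (hf : ∀ t, 0 ≤ t → HasDerivAt f (f' t) t)
    (h0 : 0 < f 0) (hkey : ∀ t, 0 ≤ t → f t = 0 → 0 < f' t) :
    ∀ t, 0 ≤ t → 0 < f t := by
  intro t ht
  by_contra hle
  push_neg at hle
  have hcont : ContinuousOn f (Set.Icc 0 t) := fun u hu =>
    ((hf u hu.1).continuousAt).continuousWithinAt
  set S : Set ℝ := Set.Icc 0 t ∩ f ⁻¹' Set.Iic 0 with hSdef
  have hSne : S.Nonempty := ⟨t, ⟨ht, le_refl t⟩, hle⟩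
  have hSclosed : IsClosed S :=
    hcont.preimage_isClosed_of_isClosed isClosed_Icc isClosed_Iic
  have hSbdd : BddBelow S := ⟨0, fun u hu => hu.1.1⟩
  set s := sInf S with hs
  have hsS : s ∈ S := hSclosed.csInf_mem hSne hSbdd
  have hs0 : 0 ≤ s := hsS.1.1
  have hst : s ≤ t := hsS.1.2
  have hfs : f s ≤ 0 := hsS.2
  have hspos : 0 < s := by
    rcases hs0.eq_or_lt with h | h
    · exact absurd hfs (by rw [← h]; linarith)
    · exact h
  have hbefore : ∀ u, 0 ≤ u → u < s → 0 < f u := by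
    intro u hu0 hus
    by_contra hfu
    push_neg at hfu
    exact absurd hus (not_lt.2 (csInf_le hSbdd ⟨⟨hu0, hus.le.trans hst⟩, hfu⟩))
  have hfs0 : f s = 0 := by
    rcases hfs.eq_or_lt with h | h
    · exact h
    · exfalso
      have hcont' : ContinuousOn f (Set.Icc 0 s) :=
        hcont.mono (Icc_subset_Icc le_rfl hst)
      have h0' : (0:ℝ) ∈ Set.Icc (f s) (f 0) := ⟨hfs, h0.le⟩
      obtain ⟨u, hu, hfu⟩ := intermediate_value_Icc' hs0 hcont' h0'
      rcases lt_or_eq_of_le hu.2 with h' | h'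
      · exact absurd hfu (ne_of_gt (hbefore u hu.1 h'))
      · rw [h'] at hfu; linarith
  have hd : 0 < f' s := hkey s hs0 hfs0
  have hslope : Tendsto (slope f s) (𝓝[≠] s) (𝓝 (f' s)) :=
    hasDerivAt_iff_tendsto_slope.mp (hf s hs0)
  have hev : ∀ᶠ u in 𝓝[≠] s, 0 < slope f s u := hslope.eventually (eventually_gt_nhds hd)
  have hev2 : ∀ᶠ u in 𝓝[<] s, 0 < slope f s u :=
    hev.filter_mono (nhdsWithin_mono s fun u hu => ne_of_lt hu)
  have hev3 : ∀ᶠ u in 𝓝[<] s, u ∈ Set.Ioo 0 s :=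
    Ioo_mem_nhdsLT_of_mem ⟨hspos, le_refl s⟩
  obtain ⟨u, hu1, hu2⟩ := (hev2.and hev3).exists
  have hden : u - s < 0 := by linarith [hu2.2]
  have hnum : f u - f s < 0 := by
    by_contra h
    push_neg at h
    have : slope f s u ≤ 0 := by
      rw [slope_def_field]
      exact div_nonpos_iff.2 (Or.inl ⟨h, hden.le⟩)
    linarith
  have : 0 < f u := hbefore u hu2.1.le hu2.2
  linarith

lemma mono_aux (f f' : ℝ → ℝ) (hf : ∀ t, 0 ≤ t → HasDerivAt f (f' t) t)
    (h' : ∀ t, 0 ≤ t → 0 ≤ f' t) : ∀ t, 0 ≤ t → f 0 ≤ f t := by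
  intro t ht
  have hmono : MonotoneOn f (Set.Ici 0) := by
    apply monotoneOn_of_deriv_nonneg (convex_Ici (0:ℝ))
    · exact fun u hu => ((hf u hu).continuousAt).continuousWithinAt
    · intro u hu
      rw [interior_Ici] at hu
      exact ((hf u hu.le).differentiableAt).differentiableWithinAt
    · intro u hu
      rw [interior_Ici] at hu
      rw [(hf u hu.le).deriv]
      exact h' u hu.le
  exact hmono Set.self_mem_Ici ht ht

set_option maxHeartbeats 2000000 in
/-- Optimal algebraic time-decay rates for the Lotka–Volterra system. -/
theorem stmt_4 (m dG PM α0 β0 : ℝ) (n : ℕ) (hm : 1 < m) (hdG : 0 < dG) (hPM : 0 < PM)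
    (hn : 2 ≤ n) (α β : ℝ → ℝ) (hα0 : 0 < α0) (hβ0 : 0 < β0)
    (hαode : ∀ t, 0 ≤ t →
      HasDerivAt α ((m - 1) * dG * α t * (PM - α t - (2 * n / dG) * β t)) t)
    (hβode : ∀ t, 0 ≤ t →
      HasDerivAt β ((m - 1) * dG * β t *
        (PM - α t - ((2 * n * (m - 1) + 4) / (dG * (m - 1))) * β t)) t)
    (hinitα : α 0 = α0) (hinitβ : β 0 = β0)
    (hini1 : α0 < PM - (2 * n / dG) * β0)
    (hini2 : PM - ((2 * n * (m - 1) + 4) / (dG * (m - 1))) * β0 < α0)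
    (hbd : ∀ t, 0 < t → α0 ≤ α t ∧ α t ≤ PM ∧ 0 < β t) :
    ∃ C : ℝ, 0 < C ∧ ∀ t, 0 < t →
      C⁻¹ * (1 + t)⁻¹ ≤ PM - α t ∧ PM - α t ≤ C * (1 + t)⁻¹ ∧
      C⁻¹ * (1 + t)⁻¹ ≤ β t ∧ β t ≤ C * (1 + t)⁻¹ := by
  have hm1 : (0:ℝ) < m - 1 := by linarith
  have hnpos : (0:ℝ) < (n:ℝ) := by
    have : (2:ℝ) ≤ (n:ℝ) := by exact_mod_cast hn
    linarith
  set L : ℝ := 2 * (n:ℝ) / dG with hLdef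
  set K : ℝ := (2 * (n:ℝ) * (m - 1) + 4) / (dG * (m - 1)) with hKdef
  have hL : 0 < L := by rw [hLdef]; exact div_pos (by linarith) hdG
  have hK : 0 < K := by
    rw [hKdef]
    exact div_pos (by nlinarith [mul_pos hnpos hm1]) (mul_pos hdG hm1)
  have hKL : K - L = 4 / (dG * (m - 1)) := by
    rw [hKdef, hLdef]; field_simp; ring
  have hKLpos : 0 < K - L := by
    rw [hKL]; exact div_pos (by norm_num) (mul_pos hdG hm1)
  -- basic bounds valid for all t ≥ 0
  have hβpos : ∀ t, 0 ≤ t → 0 < β t := by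
    intro t ht
    rcases ht.eq_or_lt with h | h
    · rw [← h, hinitβ]; exact hβ0
    · exact (hbd t h).2.2
  have hαlb : ∀ t, 0 ≤ t → α0 ≤ α t := by
    intro t ht
    rcases ht.eq_or_lt with h | h
    · rw [← h, hinitα]
    · exact (hbd t h).1
  have hαub : ∀ t, 0 ≤ t → α t ≤ PM := by
    intro t ht
    rcases ht.eq_or_lt with h | h
    · rw [← h, hinitα]
      nlinarith [mul_pos hL hβ0]
    · exact (hbd t h).2.1
  have hαpos : ∀ t, 0 ≤ t → 0 < α t := fun t ht => lt_of_lt_of_le hα0 (hαlb t ht)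
  -- z = PM - α - L β stays positive
  have hzpos : ∀ t, 0 ≤ t → 0 < PM - α t - L * β t := by
    have := stays_pos (fun u => PM - α u - L * β u)
      (fun u => 0 - ((m - 1) * dG * α u * (PM - α u - L * β u)) -
        L * ((m - 1) * dG * β u * (PM - α u - K * β u)))
      (fun u hu => ((hasDerivAt_const u PM).sub (hαode u hu)).sub
        (HasDerivAt.const_mul L (hβode u hu)))
      (by simp only [hinitα, hinitβ]; linarith)
      ?_
    · exact this
    · intro u hu hzu
      have hβu := hβpos u hu
      have heq : PM - α u = L * β u := by linarith
      show 0 < 0 - ((m - 1) * dG * α u * (PM - α u - L * β u)) -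
        L * ((m - 1) * dG * β u * (PM - α u - K * β u))
      rw [heq]
      nlinarith [mul_pos (mul_pos (mul_pos (mul_pos hm1 hdG) hL) hKLpos) (mul_pos hβu hβu)]
  -- g = α + K β - PM stays positive
  have hgpos : ∀ t, 0 ≤ t → 0 < α t + K * β t - PM := by
    have := stays_pos (fun u => α u + K * β u - PM)
      (fun u => (m - 1) * dG * α u * (PM - α u - L * β u) +
        K * ((m - 1) * dG * β u * (PM - α u - K * β u)))
      (fun u hu => ((hαode u hu).add (HasDerivAt.const_mul K (hβode u hu))).sub_const PM)
      (by simp only [hinitα, hinitβ]; linarith)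
      ?_
    · exact this
    · intro u hu hgu
      have hβu := hβpos u hu
      have hαu := hαpos u hu
      have heq : PM - α u = K * β u := by linarith
      show 0 < (m - 1) * dG * α u * (PM - α u - L * β u) +
        K * ((m - 1) * dG * β u * (PM - α u - K * β u))
      rw [heq]
      nlinarith [mul_pos (mul_pos (mul_pos hm1 hdG) hKLpos) (mul_pos hαu hβu)]
  -- derivative of α/β is 4α
  have hr4 : ∀ t, 0 ≤ t → HasDerivAt (fun u => α u / β u) (4 * α t) t := by
    intro t ht
    have hβt := (hβpos t ht).ne'
    have h := (hαode t ht).div (hβode t ht) hβt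
    refine h.congr_deriv ?_
    rw [hLdef, hKdef]
    field_simp
    ring
  obtain ⟨r0, hr0def⟩ : ∃ x : ℝ, x = α0 / β0 := ⟨_, rfl⟩
  have hr0 : 0 < r0 := by rw [hr0def]; exact div_pos hα0 hβ0
  have hr00 : α 0 / β 0 = r0 := by rw [hinitα, hinitβ, hr0def]
  -- lower bound on α/β
  have hrlb : ∀ t, 0 ≤ t → r0 + 4 * α0 * t ≤ α t / β t := by
    intro t ht
    have := mono_aux (fun u => α u / β u - 4 * α0 * u) (fun u => 4 * α u - 4 * α0)
      (fun u hu => by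
        have h1 := (hr4 u hu).sub ((hasDerivAt_id u).const_mul (4 * α0))
        exact h1.congr_deriv (by ring))
      (fun u hu => by show (0:ℝ) ≤ 4 * α u - 4 * α0; have := hαlb u hu; linarith) t ht
    simp only [hr00, mul_zero, sub_zero] at this
    linarith
  have hrub : ∀ t, 0 ≤ t → α t / β t ≤ r0 + 4 * PM * t := by
    intro t ht
    have := mono_aux (fun u => 4 * PM * u - α u / β u) (fun u => 4 * PM - 4 * α u)
      (fun u hu => by
        have h1 := ((hasDerivAt_id u).const_mul (4 * PM)).sub (hr4 u hu)
        exact h1.congr_deriv (by ring))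
      (fun u hu => by show (0:ℝ) ≤ 4 * PM - 4 * α u; have := hαub u hu; linarith) t ht
    simp only [hr00, mul_zero, zero_sub] at this
    linarith
  -- multiplication-form bounds on β
  have hub : ∀ t, 0 ≤ t → β t * (r0 + 4 * α0 * t) ≤ PM := by
    intro t ht
    have hβt := hβpos t ht
    have h1 := (le_div_iff₀ hβt).1 (hrlb t ht)
    nlinarith [hαub t ht]
  have hlb : ∀ t, 0 ≤ t → α0 ≤ β t * (r0 + 4 * PM * t) := by
    intro t ht
    have hβt := hβpos t ht
    have h1 := (div_le_iff₀ hβt).1 (hrub t ht)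
    nlinarith [hαlb t ht]
  -- constants
  obtain ⟨M, hMdef⟩ : ∃ x : ℝ, x = max r0 (4 * PM) := ⟨_, rfl⟩
  have hM : 0 < M := by rw [hMdef]; exact lt_of_lt_of_le hr0 (le_max_left _ _)
  obtain ⟨Cu, hCudef⟩ : ∃ x : ℝ, x = r0⁻¹ + (4 * α0)⁻¹ := ⟨_, rfl⟩
  have hCu : 0 < Cu := by
    rw [hCudef]
    exact add_pos (inv_pos.2 hr0) (inv_pos.2 (by linarith))
  have hCur0 : 1 ≤ Cu * r0 := by
    rw [hCudef]
    have h1 : r0⁻¹ * r0 = 1 := inv_mul_cancel₀ hr0.ne'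
    have h2 : 0 < (4 * α0)⁻¹ * r0 := mul_pos (inv_pos.2 (by linarith)) hr0
    nlinarith
  have hCua0 : 1 ≤ Cu * (4 * α0) := by
    rw [hCudef]
    have h1 : (4 * α0)⁻¹ * (4 * α0) = 1 := inv_mul_cancel₀ (by nlinarith)
    have h2 : 0 < r0⁻¹ * (4 * α0) := mul_pos (inv_pos.2 hr0) (by linarith)
    nlinarith
  obtain ⟨A1, hA1def⟩ : ∃ x : ℝ, x = Cu * PM := ⟨_, rfl⟩
  have hA1 : 0 < A1 := by rw [hA1def]; exact mul_pos hCu hPM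
  obtain ⟨B1, hB1def⟩ : ∃ x : ℝ, x = α0 / M := ⟨_, rfl⟩
  have hB1 : 0 < B1 := by rw [hB1def]; exact div_pos hα0 hM
  obtain ⟨C, hCdef⟩ : ∃ x : ℝ, x = max (max A1 (K * A1)) (max B1⁻¹ (L * B1)⁻¹) := ⟨_, rfl⟩
  have hCA1 : A1 ≤ C := by
    rw [hCdef]; exact (le_max_left _ _).trans (le_max_left _ _)
  have hCKA1 : K * A1 ≤ C := by
    rw [hCdef]; exact (le_max_right _ _).trans (le_max_left _ _)
  have hCB1 : B1⁻¹ ≤ C := by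
    rw [hCdef]; exact (le_max_left _ _).trans (le_max_right _ _)
  have hCB2 : (L * B1)⁻¹ ≤ C := by
    rw [hCdef]; exact (le_max_right _ _).trans (le_max_right _ _)
  have hC : 0 < C := lt_of_lt_of_le hA1 hCA1
  refine ⟨C, hC, ?_⟩
  intro t ht
  have h1t : (0:ℝ) < 1 + t := by linarith
  have ht0 : (0:ℝ) ≤ t := ht.le
  have hβt := hβpos t ht0
  -- S1 : β t * (1+t) ≤ A1
  have S1 : β t * (1 + t) ≤ A1 := by
    have h1 := hub t ht0
    have h2 : β t * (1 + t) ≤ β t * (Cu * (r0 + 4 * α0 * t)) := by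
      have : 1 + t ≤ Cu * (r0 + 4 * α0 * t) := by nlinarith
      exact mul_le_mul_of_nonneg_left this hβt.le
    calc β t * (1 + t) ≤ β t * (Cu * (r0 + 4 * α0 * t)) := h2
      _ = Cu * (β t * (r0 + 4 * α0 * t)) := by ring
      _ ≤ Cu * PM := mul_le_mul_of_nonneg_left h1 hCu.le
      _ = A1 := hA1def.symm
  -- S2 : B1 ≤ β t * (1+t)
  have S2 : B1 ≤ β t * (1 + t) := by
    have h1 := hlb t ht0
    have h2 : r0 + 4 * PM * t ≤ M * (1 + t) := by
      have hm1' : r0 ≤ M := by rw [hMdef]; exact le_max_left _ _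
      have hm2' : 4 * PM ≤ M := by rw [hMdef]; exact le_max_right _ _
      nlinarith
    have h3 : α0 ≤ β t * (M * (1 + t)) :=
      h1.trans (mul_le_mul_of_nonneg_left h2 hβt.le)
    rw [hB1def, div_le_iff₀ hM]
    nlinarith
  -- S3, S4
  have S3 : PM - α t ≤ K * β t := by have := hgpos t ht0; linarith
  have S4 : L * β t ≤ PM - α t := by have := hzpos t ht0; linarith
  have hCinv1 : C⁻¹ ≤ B1 := by
    calc C⁻¹ ≤ (B1⁻¹)⁻¹ := inv_anti₀ (inv_pos.2 hB1) hCB1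
      _ = B1 := inv_inv B1
  have hCinv2 : C⁻¹ ≤ L * B1 := by
    calc C⁻¹ ≤ ((L * B1)⁻¹)⁻¹ := inv_anti₀ (inv_pos.2 (mul_pos hL hB1)) hCB2
      _ = L * B1 := inv_inv _
  refine ⟨?_, ?_, ?_, ?_⟩
  · -- C⁻¹ (1+t)⁻¹ ≤ PM - α t
    have h1 : C⁻¹ ≤ (PM - α t) * (1 + t) := by
      have h2 : L * B1 ≤ L * (β t * (1 + t)) := mul_le_mul_of_nonneg_left S2 hL.le
      nlinarith
    calc C⁻¹ * (1 + t)⁻¹ ≤ ((PM - α t) * (1 + t)) * (1 + t)⁻¹ :=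
          mul_le_mul_of_nonneg_right h1 (inv_pos.2 h1t).le
      _ = PM - α t := by field_simp
  · -- PM - α t ≤ C (1+t)⁻¹
    rw [← div_eq_mul_inv, le_div_iff₀ h1t]
    have h2 : (PM - α t) * (1 + t) ≤ K * (β t * (1 + t)) := by nlinarith
    calc (PM - α t) * (1 + t) ≤ K * (β t * (1 + t)) := h2
      _ ≤ K * A1 := mul_le_mul_of_nonneg_left S1 hK.le
      _ ≤ C := hCKA1
  · -- C⁻¹ (1+t)⁻¹ ≤ β t
    have h1 : C⁻¹ ≤ β t * (1 + t) := hCinv1.trans S2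
    calc C⁻¹ * (1 + t)⁻¹ ≤ (β t * (1 + t)) * (1 + t)⁻¹ :=
          mul_le_mul_of_nonneg_right h1 (inv_pos.2 h1t).le
      _ = β t := by field_simp
  · -- β t ≤ C (1+t)⁻¹
    rw [← div_eq_mul_inv, le_div_iff₀ h1t]
    exact S1.trans hCA1
end
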